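/- Equation (8) (derivative of the quadratic loss in the garrote parameter). Let A be a bounded linear operator on H and g ∈ H. For c ∈ H, i ∈ Fin d and ξ ∈ (0,1)^d, the real function t ↦ ½⟨S_{ξ[i↦t]} c, A(S_{ξ[i↦t]} c)⟩ − ⟨g, S_{ξ[i↦t]} c⟩, where ξ[i↦t] ∈ (0,1)^d is ξ with its i-th coordinate replaced by t ∈ (0,1), is differentiable at t = ξ i with derivative ½⟨D_i(ξ)c, A(S_ξ c)⟩ + ½⟨S_ξ c, A(D_i(ξ)c)⟩ − ⟨g, D_i(ξ)c⟩. -/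

import Mathlib

open MeasureTheory Filter Topology

noncomputable section

/-- Factorial `α!` of a multi-index `α : Fin d → ℕ`. -/
def mfact {d : ℕ} (α : Fin d → ℕ) : ℝ := ∏ i, (Nat.factorial (α i) : ℝ)

/-- Membership in the native space `H` of the power series kernel with weights `w`:
the coefficients vanish where the weights do, and the weighted square sum is finite. -/
def memH {d : ℕ} (w : (Fin d → ℕ) → ℝ) (c : (Fin d → ℕ) → ℝ) : Prop :=
  (∀ α, w α = 0 → c α = 0) ∧
    Summable (fun α : Fin d → ℕ => mfact α ^ 2 * c α ^ 2 / w α)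

/-- Inner product `⟨c, c'⟩` on the native space (terms with `w α = 0` vanish since
division by zero is zero). -/
def innerH {d : ℕ} (w : (Fin d → ℕ) → ℝ) (c c' : (Fin d → ℕ) → ℝ) : ℝ :=
  ∑' α : Fin d → ℕ, mfact α ^ 2 * c α * c' α / w α

/-- Norm on the native space. -/
def normH {d : ℕ} (w : (Fin d → ℕ) → ℝ) (c : (Fin d → ℕ) → ℝ) : ℝ :=
  Real.sqrt (innerH w c c)

/-- The scaling operator `S_ξ`, `(S_ξ c) α = ξ^α · c α`. -/
def Sscale {d : ℕ} (ξ : Fin d → ℝ) (c : (Fin d → ℕ) → ℝ) : (Fin d → ℕ) → ℝ :=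
  fun α => (∏ i, ξ i ^ α i) * c α

/-- The scaling-derivative sequence `D_i(ξ) c`,
`(D_i(ξ)c) α = (α i)·(ξ i)^(α i − 1)·(∏_{j≠i} (ξ j)^(α j))·(c α)`
(the factor is `0` when `α i = 0`, as enforced by the factor `(α i : ℝ)`). -/
def Dscale {d : ℕ} (i : Fin d) (ξ : Fin d → ℝ) (c : (Fin d → ℕ) → ℝ) : (Fin d → ℕ) → ℝ :=
  fun α => (α i : ℝ) * ξ i ^ (α i - 1) * (∏ j ∈ Finset.univ.erase i, ξ j ^ α j) * c α

/-- A bounded linear operator on the native space: maps `H` to `H`, is linear on `H`,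
and is bounded on `H`. -/
def IsBoundedOpH {d : ℕ} (w : (Fin d → ℕ) → ℝ)
    (A : ((Fin d → ℕ) → ℝ) → ((Fin d → ℕ) → ℝ)) : Prop :=
  (∀ c, memH w c → memH w (A c)) ∧
  (∀ (a : ℝ) (c c' : (Fin d → ℕ) → ℝ), memH w c → memH w c' →
      A (a • c + c') = a • A c + A c') ∧
  (∃ M : ℝ, 0 ≤ M ∧ ∀ c, memH w c → normH w (A c) ≤ M * normH w c)

/-- Operator norm on the native space: the least bound constant. -/
def opNormH {d : ℕ} (w : (Fin d → ℕ) → ℝ)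
    (A : ((Fin d → ℕ) → ℝ) → ((Fin d → ℕ) → ℝ)) : ℝ :=
  sInf {M : ℝ | 0 ≤ M ∧ ∀ c, memH w c → normH w (A c) ≤ M * normH w c}

/-- The quadratic loss `Q_{A,g}(ξ; c) = ½⟨S_ξ c, A (S_ξ c)⟩ − ⟨g, S_ξ c⟩`. -/
def quadLoss {d : ℕ} (w : (Fin d → ℕ) → ℝ)
    (A : ((Fin d → ℕ) → ℝ) → ((Fin d → ℕ) → ℝ)) (g : (Fin d → ℕ) → ℝ)
    (ξ : Fin d → ℝ) (c : (Fin d → ℕ) → ℝ) : ℝ :=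
  (1/2) * innerH w (Sscale ξ c) (A (Sscale ξ c)) - innerH w g (Sscale ξ c)

/-- The ξ_i-derivative of the quadratic loss:
`½⟨D_i(ξ)c, A(S_ξ c)⟩ + ½⟨S_ξ c, A(D_i(ξ)c)⟩ − ⟨g, D_i(ξ)c⟩`. -/
def quadLossDeriv {d : ℕ} (w : (Fin d → ℕ) → ℝ)
    (A : ((Fin d → ℕ) → ℝ) → ((Fin d → ℕ) → ℝ)) (g : (Fin d → ℕ) → ℝ)
    (i : Fin d) (ξ : Fin d → ℝ) (c : (Fin d → ℕ) → ℝ) : ℝ :=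
  (1/2) * innerH w (Dscale i ξ c) (A (Sscale ξ c))
    + (1/2) * innerH w (Sscale ξ c) (A (Dscale i ξ c))
    - innerH w g (Dscale i ξ c)

/-- The function represented by a coefficient sequence: `f_c(x) = ∑_α (c α)·x^α`. -/
def evalF {d : ℕ} (c : (Fin d → ℕ) → ℝ) (x : Fin d → ℝ) : ℝ :=
  ∑' α : Fin d → ℕ, c α * ∏ i, x i ^ α i

/-- Sup norm of the represented function on a set `Z`. -/
def supNormOn {d : ℕ} (Z : Set (Fin d → ℝ)) (c : (Fin d → ℕ) → ℝ) : ℝ :=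
  ⨆ z : Z, |evalF c (z : Fin d → ℝ)|


/-!
Under `c ↦ (α! c_α / √w_α)_α`, the space `H` sits isometrically in `ℓ²`, `A` becomes a
continuous linear operator `T` on `ℓ²`, and the loss along the garrote curve becomes
`½⟪F t, T (F t)⟫ - ⟪G, F t⟫` with `F t` the image of `S_{ξ[i↦t]} c`. Coordinatewise,
`F t = (t ^ α_i Q_α)_α` for a fixed `Q ∈ ℓ²`, and the second-order bound
`|t^n - s^n - n s^(n-1) (t - s)| ≤ n (n-1) ρ^(n-2) (t - s)² ≤ 2 (1 - ρ)⁻³ (t - s)²`,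
uniform in `n` for `|s|, |t| ≤ ρ < 1`, makes `F` differentiable in `ℓ²` with derivative the
image of `D_i(ξ) c`. The product rule for the inner product then gives the formula.
-/

open Finset Function Set
open scoped ENNReal lp RealInnerProductSpace

section PowerBounds

variable {ρ : ℝ}

theorem choose_mul_pow_sub_le_inv_one_sub_pow (h0 : 0 ≤ ρ) (h1 : ρ < 1) (k n : ℕ) :
    (n.choose k : ℝ) * ρ ^ (n - k) ≤ ((1 - ρ) ^ (k + 1))⁻¹ := by
  have h1' : 0 < 1 - ρ := by linarith
  rcases lt_or_ge n k with hnk | hkn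
  · rw [Nat.choose_eq_zero_of_lt hnk, Nat.cast_zero, zero_mul]
    positivity
  · obtain ⟨m, rfl⟩ := Nat.exists_eq_add_of_le' hkn
    have hsum := hasSum_choose_mul_geometric_of_norm_lt_one k
      (show ‖ρ‖ < 1 by rwa [Real.norm_of_nonneg h0])
    rw [Nat.add_sub_cancel, ← one_div]
    exact le_hasSum hsum m fun j _ => by positivity

/-- Mean value inequality for `u ↦ u ^ n - n s ^ (n - 1) u` on `[[s, t]]`. -/
theorem abs_pow_sub_pow_sub_mul_le {s t : ℝ} (hs : |s| ≤ ρ) (ht : |t| ≤ ρ) (n : ℕ) :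
    |t ^ n - s ^ n - (t - s) * (n * s ^ (n - 1))| ≤
      2 * n.choose 2 * ρ ^ (n - 2) * (t - s) ^ 2 := by
  have hchoose : (n : ℝ) * (n - 1 : ℕ) = 2 * n.choose 2 := by
    rw [Nat.cast_choose_two]
    rcases n with _ | m
    · simp
    · push_cast [Nat.add_sub_cancel]; ring
  have hderiv : ∀ u ∈ uIcc s t, HasDerivWithinAt (fun u => u ^ n - n * s ^ (n - 1) * u)
      (n * u ^ (n - 1) - n * s ^ (n - 1)) (uIcc s t) u := fun u _ => by
    have h := (hasDerivAt_pow n u).sub ((hasDerivAt_id' u).const_mul ((n : ℝ) * s ^ (n - 1)))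
    rw [mul_one] at h
    exact h.hasDerivWithinAt
  have hbound : ∀ u ∈ uIcc s t,
      ‖n * u ^ (n - 1) - n * s ^ (n - 1)‖ ≤ 2 * n.choose 2 * ρ ^ (n - 2) * |t - s| := by
    intro u hu
    have hmax : max |u| |s| ≤ ρ :=
      max_le (abs_le.2 (uIcc_subset_Icc (abs_le.1 hs) (abs_le.1 ht) hu)) hs
    calc ‖n * u ^ (n - 1) - n * s ^ (n - 1)‖ = n * |u ^ (n - 1) - s ^ (n - 1)| := by
          rw [Real.norm_eq_abs, ← mul_sub, abs_mul, Nat.abs_cast]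
      _ ≤ n * (|u - s| * (n - 1 : ℕ) * max |u| |s| ^ (n - 1 - 1)) := by
          gcongr; exact abs_pow_sub_pow_le _ _ _
      _ ≤ n * (|t - s| * (n - 1 : ℕ) * ρ ^ (n - 2)) := by
          rw [Nat.sub_sub]
          gcongr n * (?_ * _ * ?_)
          · exact abs_sub_left_of_mem_uIcc hu
          · exact pow_le_pow_left₀ ((abs_nonneg u).trans (le_max_left _ _)) hmax _
      _ = 2 * n.choose 2 * ρ ^ (n - 2) * |t - s| := by rw [← hchoose]; ring
  have hmvt := (convex_uIcc s t).norm_image_sub_le_of_norm_hasDerivWithin_le hderiv hbound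
    left_mem_uIcc right_mem_uIcc
  calc |t ^ n - s ^ n - (t - s) * (n * s ^ (n - 1))|
      = ‖(t ^ n - n * s ^ (n - 1) * t) - (s ^ n - n * s ^ (n - 1) * s)‖ := by
        rw [Real.norm_eq_abs]; ring_nf
    _ ≤ 2 * n.choose 2 * ρ ^ (n - 2) * |t - s| * ‖t - s‖ := hmvt
    _ = 2 * n.choose 2 * ρ ^ (n - 2) * (t - s) ^ 2 := by
        rw [Real.norm_eq_abs, mul_assoc, ← sq, sq_abs]

theorem abs_pow_sub_pow_sub_mul_le_of_lt_one {s t : ℝ} (hs : |s| ≤ ρ) (ht : |t| ≤ ρ)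
    (hρ : ρ < 1) (n : ℕ) :
    |t ^ n - s ^ n - (t - s) * (n * s ^ (n - 1))| ≤ 2 * ((1 - ρ) ^ 3)⁻¹ * (t - s) ^ 2 := by
  refine (abs_pow_sub_pow_sub_mul_le hs ht n).trans (mul_le_mul_of_nonneg_right ?_ (sq_nonneg _))
  rw [mul_assoc]
  exact mul_le_mul_of_nonneg_left
    (choose_mul_pow_sub_le_inv_one_sub_pow ((abs_nonneg s).trans hs) hρ 2 n) zero_le_two

end PowerBounds

theorem hasDerivWithinAt_lp_of_apply_eq_pow_mul {ι : Type*} {F : ℝ → ℓ²(ι, ℝ)}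
    {Q v : ℓ²(ι, ℝ)} {m : ι → ℕ} {s : Set ℝ} {x : ℝ} (hx : x ∈ s) (hx1 : |x| < 1)
    (hF : ∀ t ∈ s, ∀ k, F t k = t ^ m k * Q k) (hv : ∀ k, v k = m k * x ^ (m k - 1) * Q k) :
    HasDerivWithinAt F v s x := by
  obtain ⟨ρ, hxρ, hρ1⟩ := exists_between hx1
  have hremainder : ∀ t ∈ s, |t| ≤ ρ →
      ‖F t - F x - (t - x) • v‖ ≤ 2 * ((1 - ρ) ^ 3)⁻¹ * ‖Q‖ * ‖(t - x) ^ 2‖ := by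
    intro t ht htρ
    calc ‖F t - F x - (t - x) • v‖ ≤ ‖(2 * ((1 - ρ) ^ 3)⁻¹ * (t - x) ^ 2) • Q‖ := by
          refine lp.norm_mono two_ne_zero fun k => ?_
          have hcoord : (F t - F x - (t - x) • v) k
              = (t ^ m k - x ^ m k - (t - x) * (m k * x ^ (m k - 1))) * Q k := by
            simp only [lp.coeFn_sub, lp.coeFn_smul, Pi.sub_apply, Pi.smul_apply, smul_eq_mul,
              hF t ht, hF x hx, hv]
            ring
          rw [hcoord, lp.coeFn_smul, Pi.smul_apply, norm_smul, norm_mul]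
          gcongr
          rw [Real.norm_eq_abs, Real.norm_of_nonneg (by positivity)]
          exact abs_pow_sub_pow_sub_mul_le_of_lt_one hxρ.le htρ hρ1 (m k)
      _ = 2 * ((1 - ρ) ^ 3)⁻¹ * ‖Q‖ * ‖(t - x) ^ 2‖ := by
          rw [norm_smul, norm_mul, Real.norm_of_nonneg (by positivity)]; ring
  have hnear : ∀ᶠ t in 𝓝[s] x, t ∈ s ∧ |t| ≤ ρ :=
    Eventually.and self_mem_nhdsWithin <| nhdsWithin_le_nhds <|
      (continuous_abs.tendsto x).eventually (eventually_le_nhds hxρ)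
  rw [hasDerivWithinAt_iff_isLittleO]
  refine (Asymptotics.IsBigO.of_bound _
    (hnear.mono fun t ht => hremainder t ht.1 ht.2)).trans_isLittleO ?_
  simpa using ((Asymptotics.isLittleO_pow_sub_sub x one_lt_two).mono nhdsWithin_le_nhds)

section NativeSpace

variable {d : ℕ} {w : (Fin d → ℕ) → ℝ}

/-- Coefficients of `c` in the orthonormal basis `(√(w α) / α!) x^α` of `H`. -/
def l2Coord (w c : (Fin d → ℕ) → ℝ) (α : Fin d → ℕ) : ℝ := mfact α * c α / √(w α)

open scoped Classical in
/-- The isometry `H → ℓ²`, extended by `0` to sequences whose coordinates are not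
square-summable. -/
def toL2 (w c : (Fin d → ℕ) → ℝ) : ℓ²(Fin d → ℕ, ℝ) :=
  if h : Memℓp (l2Coord w c) 2 then ⟨l2Coord w c, h⟩ else 0

def ofL2 (w x : (Fin d → ℕ) → ℝ) (α : Fin d → ℕ) : ℝ := √(w α) * x α / mfact α

theorem mfact_pos (α : Fin d → ℕ) : 0 < mfact α :=
  prod_pos fun i _ => mod_cast (α i).factorial_pos

theorem l2Coord_mul_l2Coord (hw : ∀ α, 0 ≤ w α) (c c' : (Fin d → ℕ) → ℝ) (α : Fin d → ℕ) :
    l2Coord w c α * l2Coord w c' α = mfact α ^ 2 * c α * c' α / w α := by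
  rw [l2Coord, l2Coord, div_mul_div_comm, Real.mul_self_sqrt (hw α)]
  ring

theorem abs_l2Coord (c : (Fin d → ℕ) → ℝ) (α : Fin d → ℕ) :
    |l2Coord w c α| = mfact α / √(w α) * |c α| := by
  rw [l2Coord, abs_div, abs_mul, abs_of_pos (mfact_pos α), abs_of_nonneg (Real.sqrt_nonneg _)]
  ring

theorem memH_iff (hw : ∀ α, 0 ≤ w α) {c : (Fin d → ℕ) → ℝ} :
    memH w c ↔ (∀ α, w α = 0 → c α = 0) ∧ Memℓp (l2Coord w c) 2 := by
  have hsq : ∀ α, ‖l2Coord w c α‖ ^ (2 : ℝ≥0∞).toReal = mfact α ^ 2 * c α ^ 2 / w α := by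
    intro α
    rw [ENNReal.toReal_ofNat, Real.rpow_two, Real.norm_eq_abs, sq_abs, sq,
      l2Coord_mul_l2Coord hw, sq (c α), mul_assoc]
  rw [memH, memℓp_gen_iff (by norm_num)]
  simp only [hsq]

theorem toL2_apply (hw : ∀ α, 0 ≤ w α) {c : (Fin d → ℕ) → ℝ} (hc : memH w c)
    (α : Fin d → ℕ) : toL2 w c α = l2Coord w c α := by
  rw [toL2, dif_pos ((memH_iff hw).1 hc).2]

theorem innerH_eq_inner_toL2 (hw : ∀ α, 0 ≤ w α) {c c' : (Fin d → ℕ) → ℝ} (hc : memH w c)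
    (hc' : memH w c') : innerH w c c' = ⟪toL2 w c, toL2 w c'⟫ := by
  rw [lp.inner_eq_tsum, innerH]
  refine tsum_congr fun α => ?_
  rw [toL2_apply hw hc, toL2_apply hw hc', RCLike.inner_apply, conj_trivial,
    l2Coord_mul_l2Coord hw]
  ring

theorem normH_eq_norm_toL2 (hw : ∀ α, 0 ≤ w α) {c : (Fin d → ℕ) → ℝ} (hc : memH w c) :
    normH w c = ‖toL2 w c‖ := by
  rw [normH, innerH_eq_inner_toL2 hw hc hc, real_inner_self_eq_norm_sq,
    Real.sqrt_sq (norm_nonneg _)]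

theorem memH_of_abs_le (hw : ∀ α, 0 ≤ w α) {c a : (Fin d → ℕ) → ℝ} (hc : memH w c) (K : ℝ)
    (h : ∀ α, |a α| ≤ K * |c α|) : memH w a := by
  refine (memH_iff hw).2 ⟨fun α hα => ?_, ((memH_iff hw).1 hc).2.const_mul K |>.mono' fun α => ?_⟩
  · simpa [hc.1 α hα] using h α
  · calc ‖l2Coord w a α‖ = mfact α / √(w α) * |a α| := abs_l2Coord a α
      _ ≤ mfact α / √(w α) * (K * |c α|) :=
          mul_le_mul_of_nonneg_left (h α) (div_nonneg (mfact_pos α).le (Real.sqrt_nonneg _))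
      _ = K * |l2Coord w c α| := by rw [abs_l2Coord]; ring
      _ ≤ ‖K * l2Coord w c α‖ := by
          rw [Real.norm_eq_abs, abs_mul]; gcongr; exact le_abs_self K

theorem memH_zero : memH w 0 := ⟨fun _ _ => rfl, by simp [summable_zero]⟩

theorem memH.add (hw : ∀ α, 0 ≤ w α) {u v : (Fin d → ℕ) → ℝ} (hu : memH w u) (hv : memH w v) :
    memH w (u + v) := by
  refine (memH_iff hw).2 ⟨fun α hα => by simp [hu.1 α hα, hv.1 α hα], ?_⟩
  convert ((memH_iff hw).1 hu).2.add ((memH_iff hw).1 hv).2 using 1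
  ext α
  simp only [l2Coord, Pi.add_apply]
  ring

theorem memH.smul (hw : ∀ α, 0 ≤ w α) {u : (Fin d → ℕ) → ℝ} (hu : memH w u) (a : ℝ) :
    memH w (a • u) :=
  memH_of_abs_le hw hu |a| fun α => by simp [abs_mul]

theorem toL2_add (hw : ∀ α, 0 ≤ w α) {u v : (Fin d → ℕ) → ℝ} (hu : memH w u) (hv : memH w v) :
    toL2 w (u + v) = toL2 w u + toL2 w v := by
  ext α
  simp only [lp.coeFn_add, Pi.add_apply, toL2_apply hw (hu.add hw hv), toL2_apply hw hu,
    toL2_apply hw hv, l2Coord]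
  ring

theorem toL2_smul (hw : ∀ α, 0 ≤ w α) {u : (Fin d → ℕ) → ℝ} (hu : memH w u) (a : ℝ) :
    toL2 w (a • u) = a • toL2 w u := by
  ext α
  simp only [lp.coeFn_smul, Pi.smul_apply, smul_eq_mul, toL2_apply hw (hu.smul hw a),
    toL2_apply hw hu, l2Coord]
  ring

theorem abs_l2Coord_ofL2_le (hw : ∀ α, 0 ≤ w α) (x : (Fin d → ℕ) → ℝ) (α : Fin d → ℕ) :
    |l2Coord w (ofL2 w x) α| ≤ |x α| := by
  rcases (hw α).eq_or_lt with h | h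
  · simp [l2Coord, ← h]
  · rw [l2Coord, ofL2, mul_div_cancel₀ _ (mfact_pos α).ne', mul_div_cancel_left₀ _
      (Real.sqrt_pos.2 h).ne']

theorem memH_ofL2 (hw : ∀ α, 0 ≤ w α) (x : ℓ²(Fin d → ℕ, ℝ)) : memH w (ofL2 w x) :=
  (memH_iff hw).2 ⟨fun α hα => by simp [ofL2, hα],
    (lp.memℓp x).mono' fun α => abs_l2Coord_ofL2_le hw x α⟩

theorem norm_toL2_ofL2_le (hw : ∀ α, 0 ≤ w α) (x : ℓ²(Fin d → ℕ, ℝ)) :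
    ‖toL2 w (ofL2 w x)‖ ≤ ‖x‖ :=
  lp.norm_mono two_ne_zero fun α => by
    rw [toL2_apply hw (memH_ofL2 hw x)]; exact abs_l2Coord_ofL2_le hw x α

theorem ofL2_toL2 (hw : ∀ α, 0 ≤ w α) {c : (Fin d → ℕ) → ℝ} (hc : memH w c) :
    ofL2 w (toL2 w c) = c := by
  ext α
  rw [ofL2, toL2_apply hw hc, l2Coord]
  rcases (hw α).eq_or_lt with h | h
  · simp [← h, hc.1 α h.symm]
  · field_simp [(mfact_pos α).ne', (Real.sqrt_pos.2 h).ne']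

end NativeSpace

namespace IsBoundedOpH

variable {d : ℕ} {w : (Fin d → ℕ) → ℝ} {A : ((Fin d → ℕ) → ℝ) → ((Fin d → ℕ) → ℝ)}

theorem map_zero (hA : IsBoundedOpH w A) : A 0 = 0 := by
  simpa using hA.2.1 1 0 0 memH_zero memH_zero

theorem map_add (hA : IsBoundedOpH w A) {u v : (Fin d → ℕ) → ℝ} (hu : memH w u)
    (hv : memH w v) : A (u + v) = A u + A v := by
  simpa using hA.2.1 1 u v hu hv

theorem map_smul (hA : IsBoundedOpH w A) (a : ℝ) {u : (Fin d → ℕ) → ℝ} (hu : memH w u) :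
    A (a • u) = a • A u := by
  simpa [hA.map_zero] using hA.2.1 a u 0 hu memH_zero

def toL2CLM (hw : ∀ α, 0 ≤ w α) (hA : IsBoundedOpH w A) :
    ℓ²(Fin d → ℕ, ℝ) →L[ℝ] ℓ²(Fin d → ℕ, ℝ) :=
  LinearMap.mkContinuousOfExistsBound
    { toFun := fun x => toL2 w (A (ofL2 w x))
      map_add' := fun x y => by
        have hofL2 : ofL2 w ⇑(x + y) = ofL2 w x + ofL2 w y := by
          ext α; simp only [ofL2, lp.coeFn_add, Pi.add_apply]; ring
        rw [hofL2, hA.map_add (memH_ofL2 hw x) (memH_ofL2 hw y),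
          toL2_add hw (hA.1 _ (memH_ofL2 hw x)) (hA.1 _ (memH_ofL2 hw y))]
      map_smul' := fun a x => by
        have hofL2 : ofL2 w ⇑(a • x) = a • ofL2 w x := by
          ext α; simp only [ofL2, lp.coeFn_smul, Pi.smul_apply, smul_eq_mul]; ring
        rw [hofL2, hA.map_smul a (memH_ofL2 hw x), toL2_smul hw (hA.1 _ (memH_ofL2 hw x)),
          RingHom.id_apply] }
    (by
      obtain ⟨M, hM0, hM⟩ := hA.2.2
      refine ⟨M, fun x => ?_⟩
      have hx := memH_ofL2 hw x
      calc ‖toL2 w (A (ofL2 w x))‖ = normH w (A (ofL2 w x)) :=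
            (normH_eq_norm_toL2 hw (hA.1 _ hx)).symm
        _ ≤ M * normH w (ofL2 w x) := hM _ hx
        _ ≤ M * ‖x‖ := by
            rw [normH_eq_norm_toL2 hw hx]; gcongr; exact norm_toL2_ofL2_le hw x)

theorem toL2CLM_toL2 (hw : ∀ α, 0 ≤ w α) (hA : IsBoundedOpH w A) {c : (Fin d → ℕ) → ℝ}
    (hc : memH w c) : hA.toL2CLM hw (toL2 w c) = toL2 w (A c) := by
  change toL2 w (A (ofL2 w (toL2 w c))) = _
  rw [ofL2_toL2 hw hc]

end IsBoundedOpH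

section Scaling

variable {d : ℕ} {w : (Fin d → ℕ) → ℝ}

theorem prod_update_pow (ξ : Fin d → ℝ) (i : Fin d) (t : ℝ) (α : Fin d → ℕ) :
    ∏ j, update ξ i t j ^ α j = t ^ α i * ∏ j ∈ univ.erase i, ξ j ^ α j := by
  rw [← mul_prod_erase univ _ (mem_univ i), update_self]
  congr 1
  exact prod_congr rfl fun j hj => by rw [update_of_ne (ne_of_mem_erase hj)]

theorem Sscale_update_apply (ξ : Fin d → ℝ) (i : Fin d) (t : ℝ) (c : (Fin d → ℕ) → ℝ)
    (α : Fin d → ℕ) : Sscale (update ξ i t) c α = t ^ α i * Sscale (update ξ i 1) c α := by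
  rw [Sscale, Sscale, prod_update_pow, prod_update_pow, one_pow, one_mul, mul_assoc]

theorem Dscale_apply_eq (ξ : Fin d → ℝ) (i : Fin d) (c : (Fin d → ℕ) → ℝ) (α : Fin d → ℕ) :
    Dscale i ξ c α = α i * ξ i ^ (α i - 1) * Sscale (update ξ i 1) c α := by
  rw [Dscale, Sscale, prod_update_pow, one_pow, one_mul, mul_assoc]

theorem memH_Sscale (hw : ∀ α, 0 ≤ w α) {c : (Fin d → ℕ) → ℝ} (hc : memH w c)
    {ξ : Fin d → ℝ} (hξ : ∀ j, |ξ j| ≤ 1) : memH w (Sscale ξ c) :=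
  memH_of_abs_le hw hc 1 fun α => by
    rw [Sscale, abs_mul, one_mul, abs_prod]
    refine mul_le_of_le_one_left (abs_nonneg _) (prod_le_one (fun j _ => abs_nonneg _) ?_)
    exact fun j _ => by rw [abs_pow]; exact pow_le_one₀ (abs_nonneg _) (hξ j)

theorem memH_Sscale_update (hw : ∀ α, 0 ≤ w α) {c : (Fin d → ℕ) → ℝ} (hc : memH w c)
    {ξ : Fin d → ℝ} (hξ : ∀ j, |ξ j| ≤ 1) (i : Fin d) {t : ℝ} (ht : |t| ≤ 1) :
    memH w (Sscale (update ξ i t) c) :=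
  memH_Sscale hw hc ((forall_update_iff ξ fun _ y => |y| ≤ 1).2 ⟨ht, fun j _ => hξ j⟩)

theorem memH_Dscale (hw : ∀ α, 0 ≤ w α) {c : (Fin d → ℕ) → ℝ} (hc : memH w c)
    {ξ : Fin d → ℝ} (hξ : ∀ j, |ξ j| ≤ 1) {i : Fin d} (hi : |ξ i| < 1) :
    memH w (Dscale i ξ c) := by
  refine memH_of_abs_le hw (memH_Sscale_update hw hc hξ i abs_one.le) ((1 - |ξ i|) ^ 2)⁻¹
    fun α => ?_
  rw [Dscale_apply_eq, abs_mul, abs_mul, Nat.abs_cast, abs_pow]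
  gcongr
  simpa using choose_mul_pow_sub_le_inv_one_sub_pow (abs_nonneg _) hi 1 (α i)

theorem hasDerivWithinAt_toL2_Sscale_update (hw : ∀ α, 0 ≤ w α) {c : (Fin d → ℕ) → ℝ}
    (hc : memH w c) {ξ : Fin d → ℝ} (hξ : ∀ j, |ξ j| ≤ 1) {i : Fin d} (hi : |ξ i| < 1) :
    HasDerivWithinAt (fun t => toL2 w (Sscale (update ξ i t) c)) (toL2 w (Dscale i ξ c))
      (Icc (-1) 1) (ξ i) := by
  have hQ := memH_Sscale_update hw hc hξ i abs_one.le
  refine hasDerivWithinAt_lp_of_apply_eq_pow_mul (Q := toL2 w (Sscale (update ξ i 1) c))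
    (m := fun α => α i) (abs_le.1 (hξ i)) hi (fun t ht α => ?_) (fun α => ?_)
  · rw [toL2_apply hw (memH_Sscale_update hw hc hξ i (abs_le.2 ht)), toL2_apply hw hQ,
      l2Coord, l2Coord, Sscale_update_apply]
    ring
  · rw [toL2_apply hw (memH_Dscale hw hc hξ hi), toL2_apply hw hQ, l2Coord, l2Coord,
      Dscale_apply_eq]
    ring

end Scaling

theorem IsBoundedOpH.innerH_apply_eq_inner {d : ℕ} {w : (Fin d → ℕ) → ℝ}
    {A : ((Fin d → ℕ) → ℝ) → ((Fin d → ℕ) → ℝ)} (hw : ∀ α, 0 ≤ w α) (hA : IsBoundedOpH w A)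
    {u v : (Fin d → ℕ) → ℝ} (hu : memH w u) (hv : memH w v) :
    innerH w u (A v) = ⟪toL2 w u, hA.toL2CLM hw (toL2 w v)⟫ := by
  rw [hA.toL2CLM_toL2 hw hv, innerH_eq_inner_toL2 hw hu (hA.1 v hv)]

theorem quadratic_loss_garrote_derivative_general
    (d : ℕ)
    (w : (Fin d → ℕ) → ℝ) (hw : ∀ α, 0 ≤ w α)
    (A : ((Fin d → ℕ) → ℝ) → ((Fin d → ℕ) → ℝ)) (hA : IsBoundedOpH w A)
    (g : (Fin d → ℕ) → ℝ) (hg : memH w g)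
    (c : (Fin d → ℕ) → ℝ) (hc : memH w c)
    (ξ : Fin d → ℝ) (hξ : ∀ j, ξ j ∈ Set.Ioo (0:ℝ) 1) (i : Fin d) :
    HasDerivWithinAt
      (fun t : ℝ => quadLoss w A g (Function.update ξ i t) c)
      (quadLossDeriv w A g i ξ c)
      (Set.Ioo (0:ℝ) 1) (ξ i) := by
  have habs : ∀ {t : ℝ}, t ∈ Ioo (0 : ℝ) 1 → |t| < 1 := fun ht => by
    rw [abs_of_pos ht.1]; exact ht.2
  have hξ1 : ∀ j, |ξ j| ≤ 1 := fun j => (habs (hξ j)).le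
  have hS : ∀ t ∈ Ioo (0 : ℝ) 1, memH w (Sscale (update ξ i t) c) := fun t ht =>
    memH_Sscale_update hw hc hξ1 i (habs ht).le
  have hSξ : memH w (Sscale ξ c) := by simpa using hS (ξ i) (hξ i)
  have hD : memH w (Dscale i ξ c) := memH_Dscale hw hc hξ1 (habs (hξ i))
  have hF := (hasDerivWithinAt_toL2_Sscale_update hw hc hξ1 (habs (hξ i))).mono
    (show Ioo (0 : ℝ) 1 ⊆ Icc (-1) 1 from
      Ioo_subset_Icc_self.trans (Icc_subset_Icc_left (by norm_num)))
  have hloss := ((hF.inner ℝ ((hA.toL2CLM hw).hasFDerivAt.comp_hasDerivWithinAt _ hF)).const_mul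
    (1 / 2)).sub ((hasDerivWithinAt_const _ _ (toL2 w g)).inner ℝ hF)
  refine (hloss.congr_of_mem (fun t ht => ?_) (hξ i)).congr_deriv ?_
  · rw [quadLoss, hA.innerH_apply_eq_inner hw (hS t ht) (hS t ht),
      innerH_eq_inner_toL2 hw hg (hS t ht)]
    rfl
  · simp only [update_eq_self, Function.comp_apply, inner_zero_left, add_zero]
    rw [quadLossDeriv, hA.innerH_apply_eq_inner hw hD hSξ, hA.innerH_apply_eq_inner hw hSξ hD,
      innerH_eq_inner_toL2 hw hg hD]
    ring

/-- Equation (8): derivative of the quadratic loss in the garrote parameter. For a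
bounded linear operator `A` on `H`, `g ∈ H`, `c ∈ H`, `ξ ∈ (0,1)^d` and a coordinate
`i`, the function `t ↦ ½⟨S_{ξ[i↦t]} c, A(S_{ξ[i↦t]} c)⟩ − ⟨g, S_{ξ[i↦t]} c⟩` on
`(0,1)` is differentiable at `t = ξ i` with derivative
`½⟨D_i(ξ)c, A(S_ξ c)⟩ + ½⟨S_ξ c, A(D_i(ξ)c)⟩ − ⟨g, D_i(ξ)c⟩`. -/
theorem quadratic_loss_garrote_derivative
    (d : ℕ) (hd : 1 ≤ d)
    (w : (Fin d → ℕ) → ℝ) (hw : ∀ α, 0 ≤ w α)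
    (hwsum : Summable fun α : Fin d → ℕ => w α / mfact α ^ 2)
    (A : ((Fin d → ℕ) → ℝ) → ((Fin d → ℕ) → ℝ)) (hA : IsBoundedOpH w A)
    (g : (Fin d → ℕ) → ℝ) (hg : memH w g)
    (c : (Fin d → ℕ) → ℝ) (hc : memH w c)
    (ξ : Fin d → ℝ) (hξ : ∀ j, ξ j ∈ Set.Ioo (0:ℝ) 1) (i : Fin d) :
    HasDerivWithinAt
      (fun t : ℝ => quadLoss w A g (Function.update ξ i t) c)
      (quadLossDeriv w A g i ξ c)
      (Set.Ioo (0:ℝ) 1) (ξ i) :=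
  quadratic_loss_garrote_derivative_general d w hw A hA g hg c hc ξ hξ i
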